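/- Let (Ω, 𝓕, ℙ) be a probability space, let k ≥ 1 be an integer, and let {τ_z}_{z∈ℝ^k} be a measure-preserving additive group action on Ω. Let μ be a subadditive process with respect to {τ_z}_{z∈ℝ^k} with bound M, and let 𝓕_inv := {A ∈ 𝓕 : ℙ(τ_z⁻¹(A) Δ A) = 0 for all z ∈ ℝ^k} be the σ-algebra of invariant sets. Then ℙ-almost surely, for every n ∈ ℕ, E[μ([−2^{n+1}, 2^{n+1})^k, ·) | 𝓕_inv] ≤ 2^k · E[μ([−2^n, 2^n)^k, ·) | 𝓕_inv]; equivalently, the sequence n ↦ (2^{n+1})^{−k} E[μ([−2^n, 2^n)^k, ·) | 𝓕_inv](ω) is almost surely nonincreasing in n. -/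

import Mathlib

/-!
The cube `[-2^(n+1), 2^(n+1))^k` is the disjoint union of its `2^k` quadrants, each the translate
of `[-2^n, 2^n)^k` by a vector `z_ε` with coordinates `±2^n`. Subadditivity and stationarity give
`μ([-2^(n+1), 2^(n+1))^k, ω) ≤ ∑_ε μ([-2^n, 2^n)^k, τ_{z_ε} ω)`. Sets of `𝓕_inv` are a.e. fixed by
the measure-preserving maps `τ_z`, so conditioning on `𝓕_inv` does not see the shifts `τ_{z_ε}`,
and each of the `2^k` summands has the same conditional expectation as `μ([-2^n, 2^n)^k, ·)`.
-/

open Function MeasureTheory symmDiff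

def halfOpenBox {ι : Type*} (p q : ι → ℝ) : Set (ι → ℝ) := {x | ∀ j, p j ≤ x j ∧ x j < q j}

def quadrantShift {ι : Type*} (a : ℝ) (ε : ι → Bool) : ι → ℝ := fun j => if ε j then a else -a

section Quadrants

variable {ι : Type*} {a : ℝ}

theorem mem_halfOpenBox_quadrant_iff {ε : ι → Bool} {x : ι → ℝ} :
    x ∈ halfOpenBox ((fun _ => -a) + quadrantShift a ε) ((fun _ => a) + quadrantShift a ε) ↔
      ∀ j, (ε j = true ↔ 0 ≤ x j) ∧ -(2 * a) ≤ x j ∧ x j < 2 * a := by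
  simp only [halfOpenBox, quadrantShift, Set.mem_ofPred_eq, Pi.add_apply]
  refine forall_congr' fun j => ?_
  cases ε j <;> simp only [Bool.false_eq_true, if_false, if_true, false_iff, true_iff, not_le] <;>
    constructor <;> intro h <;> refine ⟨?_, ?_⟩ <;> (try refine ⟨?_, ?_⟩) <;> linarith [h.1, h.2]

theorem pairwise_disjoint_halfOpenBox_quadrant :
    Pairwise (Disjoint on fun ε : ι → Bool =>
      halfOpenBox ((fun _ => -a) + quadrantShift a ε) ((fun _ => a) + quadrantShift a ε)) := by
  refine fun ε ε' hne => Set.disjoint_left.2 fun x hx hx' => hne (funext fun j => ?_)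
  rw [mem_halfOpenBox_quadrant_iff] at hx hx'
  exact Bool.eq_iff_iff.2 ((hx j).1.trans (hx' j).1.symm)

theorem iUnion_halfOpenBox_quadrant :
    ⋃ ε : ι → Bool,
        halfOpenBox ((fun _ => -a) + quadrantShift a ε) ((fun _ => a) + quadrantShift a ε) =
      halfOpenBox (fun _ => -(2 * a)) (fun _ => 2 * a) := by
  ext x
  simp only [Set.mem_iUnion, mem_halfOpenBox_quadrant_iff]
  constructor
  · rintro ⟨ε, hx⟩ j
    exact (hx j).2
  · intro hx
    exact ⟨fun j => decide (0 ≤ x j), fun j => ⟨decide_eq_true_iff, hx j⟩⟩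

end Quadrants

namespace MeasureTheory

variable {Ω E : Type*} [NormedAddCommGroup E] [NormedSpace ℝ E] {m m0 : MeasurableSpace Ω}
  {P : Measure Ω} {T : Ω → Ω}

theorem MeasurePreserving.setIntegral_preimage {g : Ω → E} (hT : MeasurePreserving T P P)
    (hg : AEStronglyMeasurable g P) {s : Set Ω} (hs : MeasurableSet s) :
    ∫ x in T ⁻¹' s, g (T x) ∂P = ∫ y in s, g y ∂P := by
  rw [← integral_indicator (hT.measurable hs), ← integral_indicator hs]
  have hcomp : (T ⁻¹' s).indicator (fun x => g (T x)) = fun x => s.indicator g (T x) :=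
    funext fun _ => Set.indicator_comp_right T
  rw [hcomp, ← integral_map hT.measurable.aemeasurable (by rw [hT.map_eq]; exact hg.indicator hs),
    hT.map_eq]

theorem condExp_comp_ae_eq_of_preimage_ae_eq [CompleteSpace E] [IsFiniteMeasure P] (hm : m ≤ m0)
    (hT : MeasurePreserving T P P) (hinv : ∀ s, MeasurableSet[m] s → T ⁻¹' s =ᵐ[P] s)
    {f : Ω → E} (hf : Integrable f P) :
    P[f ∘ T | m] =ᵐ[P] P[f | m] := by
  have hfT : Integrable (f ∘ T) P := (hT.integrable_comp hf.aestronglyMeasurable).2 hf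
  refine (ae_eq_condExp_of_forall_setIntegral_eq hm hfT
    (fun s _ _ => integrable_condExp.integrableOn) (fun s hs _ => ?_)
    stronglyMeasurable_condExp.aestronglyMeasurable).symm
  calc ∫ x in s, P[f | m] x ∂P = ∫ x in s, f x ∂P := setIntegral_condExp hm hf hs
    _ = ∫ x in T ⁻¹' s, f (T x) ∂P :=
      (hT.setIntegral_preimage hf.aestronglyMeasurable (hm s hs)).symm
    _ = ∫ x in s, (f ∘ T) x ∂P := setIntegral_congr_set (hinv s hs)

theorem condExp_le_card_mul_of_le_sum_comp [IsFiniteMeasure P] {σ : Type*} [Fintype σ]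
    (hm : m ≤ m0) {T : σ → Ω → Ω} (hT : ∀ i, MeasurePreserving (T i) P P)
    (hinv : ∀ i s, MeasurableSet[m] s → T i ⁻¹' s =ᵐ[P] s) {f g : Ω → ℝ}
    (hf : Integrable f P) (hg : Integrable g P) (hfg : ∀ ω, f ω ≤ ∑ i, g (T i ω)) :
    ∀ᵐ ω ∂P, P[f | m] ω ≤ Fintype.card σ * P[g | m] ω := by
  have hgT : ∀ i, Integrable (g ∘ T i) P := fun i =>
    ((hT i).integrable_comp hg.aestronglyMeasurable).2 hg
  have hmono : P[f | m] ≤ᵐ[P] P[∑ i, g ∘ T i | m] :=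
    condExp_mono hf (integrable_finsetSum' _ fun i _ => hgT i) <| ae_of_all _ fun ω => by
      simpa only [Finset.sum_apply, Function.comp_apply] using hfg ω
  have hsum : P[∑ i, g ∘ T i | m] =ᵐ[P] ∑ i, P[g ∘ T i | m] :=
    condExp_finsetSum (fun i _ => hgT i) m
  have hshift : ∀ᵐ ω ∂P, ∀ i, P[g ∘ T i | m] ω = P[g | m] ω :=
    ae_all_iff.2 fun i => condExp_comp_ae_eq_of_preimage_ae_eq hm (hT i) (hinv i) hg
  filter_upwards [hmono, hsum, hshift] with ω hmono hsum hshift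
  calc P[f | m] ω ≤ ∑ i, P[g ∘ T i | m] ω := by simpa only [hsum, Finset.sum_apply] using hmono
    _ = Fintype.card σ * P[g | m] ω := by simp [hshift]

end MeasureTheory

namespace SubadditiveProcess

variable {Ω : Type*} {ι : Type} [Fintype ι] {τ : (ι → ℝ) → Ω → Ω}
  {μ : (ι → ℝ) → (ι → ℝ) → Ω → ℝ}

theorem le_sum_quadrantShift [DecidableEq ι]
    (hstat : ∀ (p q z : ι → ℝ) (ω : Ω), (∀ i, p i < q i) → μ (p + z) (q + z) ω = μ p q (τ z ω))
    (hsub : ∀ (σ : Type) (s : Finset σ) (p q : ι → ℝ) (p' q' : σ → (ι → ℝ)) (ω : Ω),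
      (∀ i, p i < q i) → (∀ i ∈ s, ∀ j, p' i j < q' i j) →
      Set.PairwiseDisjoint (s : Set σ) (fun i => halfOpenBox (p' i) (q' i)) →
      (⋃ i ∈ s, halfOpenBox (p' i) (q' i)) = halfOpenBox p q →
      μ p q ω ≤ ∑ i ∈ s, μ (p' i) (q' i) ω)
    {a : ℝ} (ha : 0 < a) (ω : Ω) :
    μ (fun _ => -(2 * a)) (fun _ => 2 * a) ω ≤
      ∑ ε : ι → Bool, μ (fun _ => -a) (fun _ => a) (τ (quadrantShift a ε) ω) := by
  have hcube : ∀ c : ℝ, 0 < c → ∀ _ : ι, -c < c := fun c hc _ => by linarith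
  calc μ (fun _ => -(2 * a)) (fun _ => 2 * a) ω
      ≤ ∑ ε : ι → Bool, μ ((fun _ => -a) + quadrantShift a ε) ((fun _ => a) + quadrantShift a ε) ω :=
        hsub _ Finset.univ _ _ (fun ε : ι → Bool => (fun _ => -a) + quadrantShift a ε)
          (fun ε => (fun _ => a) + quadrantShift a ε) ω (hcube _ (by linarith))
          (fun ε _ j => by simpa only [Pi.add_apply, add_lt_add_iff_right] using hcube a ha j)
          (by
            rw [Finset.coe_univ]
            exact Set.pairwise_univ.2 (pairwise_disjoint_halfOpenBox_quadrant))
          (by simpa only [Finset.mem_univ, Set.iUnion_true] using iUnion_halfOpenBox_quadrant)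
    _ = ∑ ε : ι → Bool, μ (fun _ => -a) (fun _ => a) (τ (quadrantShift a ε) ω) :=
        Finset.sum_congr rfl fun ε _ => hstat _ _ _ ω (hcube a ha)

theorem integrable {mΩ : MeasurableSpace Ω} (P : Measure Ω) [IsFiniteMeasure P]
    {M : ℝ} (hmeas : ∀ p q : ι → ℝ, (∀ i, p i < q i) → Measurable (μ p q))
    (hbdd : ∀ (p q : ι → ℝ) (ω : Ω), (∀ i, p i < q i) → 0 ≤ μ p q ω ∧ μ p q ω ≤ M * ∏ i, (q i - p i))
    {p q : ι → ℝ} (hpq : ∀ i, p i < q i) :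
    Integrable (μ p q) P := by
  refine Integrable.of_bound (hmeas p q hpq).aestronglyMeasurable (M * ∏ i, (q i - p i))
    (ae_of_all _ fun ω => ?_)
  obtain ⟨hnonneg, hle⟩ := hbdd p q ω hpq
  rwa [Real.norm_of_nonneg hnonneg]

end SubadditiveProcess

theorem condexp_subadditive_process_dyadic_antitone_general
    {Ω : Type*} [m0 : MeasurableSpace Ω] (P : Measure Ω) [IsProbabilityMeasure P]
    (k : ℕ)
    -- the measure-preserving additive group action
    (τ : (Fin k → ℝ) → Ω → Ω)
    (hτmp : ∀ z, MeasurePreserving (τ z) P P)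
    -- the subadditive process: `μ p q ω` is the value on the half-open box `[p, q)`
    (μ : (Fin k → ℝ) → (Fin k → ℝ) → Ω → ℝ) (M : ℝ)
    -- measurability
    (hμmeas : ∀ p q : Fin k → ℝ, (∀ i, p i < q i) → Measurable (μ p q))
    -- stationarity
    (hμstat : ∀ (p q z : Fin k → ℝ) (ω : Ω), (∀ i, p i < q i) →
      μ (p + z) (q + z) ω = μ p q (τ z ω))
    -- subadditivity with respect to finite partitions into half-open boxes
    (hμsub : ∀ (ι : Type) (s : Finset ι) (p q : Fin k → ℝ) (p' q' : ι → (Fin k → ℝ)) (ω : Ω),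
      (∀ i, p i < q i) → (∀ i ∈ s, ∀ j, p' i j < q' i j) →
      (Set.PairwiseDisjoint (s : Set ι)
        fun i => {x : Fin k → ℝ | ∀ j, p' i j ≤ x j ∧ x j < q' i j}) →
      (⋃ i ∈ s, {x : Fin k → ℝ | ∀ j, p' i j ≤ x j ∧ x j < q' i j})
        = {x : Fin k → ℝ | ∀ j, p j ≤ x j ∧ x j < q j} →
      μ p q ω ≤ ∑ i ∈ s, μ (p' i) (q' i) ω)
    -- boundedness
    (hμbdd : ∀ (p q : Fin k → ℝ) (ω : Ω), (∀ i, p i < q i) →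
      0 ≤ μ p q ω ∧ μ p q ω ≤ M * ∏ i, (q i - p i))
    -- the σ-algebra of invariant sets
    (mInv : MeasurableSpace Ω)
    (hmInv : ∀ A : Set Ω, MeasurableSet[mInv] A ↔
      (MeasurableSet A ∧ ∀ z, P ((τ z ⁻¹' A) ∆ A) = 0)) :
    ∀ᵐ ω ∂P, ∀ n : ℕ,
      (P[μ (fun _ => -(2 : ℝ) ^ (n + 1)) (fun _ => (2 : ℝ) ^ (n + 1)) | mInv]) ω
        ≤ 2 ^ k * (P[μ (fun _ => -(2 : ℝ) ^ n) (fun _ => (2 : ℝ) ^ n) | mInv]) ω := by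
  by_cases hm : mInv ≤ m0
  swap
  -- `P[f | mInv]` is defined to be `0` unless `mInv ≤ m0`.
  · filter_upwards with ω n
    simp [condExp_of_not_le hm]
  have hinv : ∀ z A, MeasurableSet[mInv] A → τ z ⁻¹' A =ᵐ[P] A := fun z A hA =>
    measure_symmDiff_eq_zero_iff.1 (((hmInv A).1 hA).2 z)
  have hint : ∀ a : ℝ, 0 < a → Integrable (μ (fun _ => -a) (fun _ => a)) P := fun a ha =>
    SubadditiveProcess.integrable P hμmeas hμbdd fun _ => by linarith
  refine ae_all_iff.2 fun n => ?_
  have ha : (0 : ℝ) < 2 ^ n := by positivity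
  have hdouble := condExp_le_card_mul_of_le_sum_comp hm (fun ε => hτmp (quadrantShift _ ε))
    (fun ε => hinv _) (hint _ (by positivity)) (hint _ ha) (SubadditiveProcess.le_sum_quadrantShift hμstat hμsub ha)
  simpa [pow_succ'] using hdouble

/-- For a subadditive process `μ` with respect to a measure-preserving additive group action
`{τ_z}_{z ∈ ℝ^k}`, the conditional expectations with respect to the σ-algebra of invariant sets
of the values of the process on the dyadic cubes `[-2^n, 2^n)^k` satisfy, almost surely for all
`n`, `E[μ([-2^{n+1},2^{n+1})^k)|𝓕_inv] ≤ 2^k E[μ([-2^n,2^n)^k)|𝓕_inv]`; equivalently, the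
normalized sequence `(2^{n+1})^{-k} E[μ([-2^n,2^n)^k)|𝓕_inv]` is a.s. nonincreasing in `n`. -/
theorem condexp_subadditive_process_dyadic_antitone
    {Ω : Type*} [m0 : MeasurableSpace Ω] (P : Measure Ω) [IsProbabilityMeasure P]
    (k : ℕ) (hk : 1 ≤ k)
    -- the measure-preserving additive group action
    (τ : (Fin k → ℝ) → Ω → Ω)
    (hτmeas : ∀ z, Measurable (τ z))
    (hτmp : ∀ z, MeasurePreserving (τ z) P P)
    (hτzero : τ 0 = id)
    (hτadd : ∀ z₁ z₂, τ (z₁ + z₂) = τ z₂ ∘ τ z₁)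
    -- the subadditive process: `μ p q ω` is the value on the half-open box `[p, q)`
    (μ : (Fin k → ℝ) → (Fin k → ℝ) → Ω → ℝ) (M : ℝ) (hM : 0 < M)
    -- measurability
    (hμmeas : ∀ p q : Fin k → ℝ, (∀ i, p i < q i) → Measurable (μ p q))
    -- stationarity
    (hμstat : ∀ (p q z : Fin k → ℝ) (ω : Ω), (∀ i, p i < q i) →
      μ (p + z) (q + z) ω = μ p q (τ z ω))
    -- subadditivity with respect to finite partitions into half-open boxes
    (hμsub : ∀ (ι : Type) (s : Finset ι) (p q : Fin k → ℝ) (p' q' : ι → (Fin k → ℝ)) (ω : Ω),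
      (∀ i, p i < q i) → (∀ i ∈ s, ∀ j, p' i j < q' i j) →
      (Set.PairwiseDisjoint (s : Set ι)
        fun i => {x : Fin k → ℝ | ∀ j, p' i j ≤ x j ∧ x j < q' i j}) →
      (⋃ i ∈ s, {x : Fin k → ℝ | ∀ j, p' i j ≤ x j ∧ x j < q' i j})
        = {x : Fin k → ℝ | ∀ j, p j ≤ x j ∧ x j < q j} →
      μ p q ω ≤ ∑ i ∈ s, μ (p' i) (q' i) ω)
    -- boundedness
    (hμbdd : ∀ (p q : Fin k → ℝ) (ω : Ω), (∀ i, p i < q i) →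
      0 ≤ μ p q ω ∧ μ p q ω ≤ M * ∏ i, (q i - p i))
    -- the σ-algebra of invariant sets
    (mInv : MeasurableSpace Ω)
    (hmInv : ∀ A : Set Ω, MeasurableSet[mInv] A ↔
      (MeasurableSet A ∧ ∀ z, P ((τ z ⁻¹' A) ∆ A) = 0)) :
    ∀ᵐ ω ∂P, ∀ n : ℕ,
      (P[μ (fun _ => -(2 : ℝ) ^ (n + 1)) (fun _ => (2 : ℝ) ^ (n + 1)) | mInv]) ω
        ≤ 2 ^ k * (P[μ (fun _ => -(2 : ℝ) ^ n) (fun _ => (2 : ℝ) ^ n) | mInv]) ω :=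
  condexp_subadditive_process_dyadic_antitone_general (m0 := m0) P k τ hτmp μ M hμmeas hμstat hμsub
    hμbdd mInv hmInv
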